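/- arXiv:1710.10099 — 3 statements merged into one kernel-verified Lean document; each statement's English description precedes it below -/
import Mathlib

section
/- (Finite variance of the optimal reconstruction.) Define the extrapolated basis functions φ̃_k(u) = ⟨φ_k, γ_u⟩₂/λ_k where γ_u(v) = E[X^M(u) X^O(v)]. Then for every u the series Σ_k λ_k φ̃_k(u)² converges and Var(𝓛(X^O)(u)) = Σ_k λ_k φ̃_k(u)² ≤ γ(u,u) = Var(X^M(u)) < ∞, where 𝓛(X^O)(u) = Σ_k ξ_k φ̃_k(u). -/
open MeasureTheory ProbabilityTheory Filter

/-- Finite variance of the optimal reconstruction: with `φ̃_k(u) = E[ξ_k X^M(u)]/λ_k`,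
the series `Σ_k λ_k φ̃_k(u)²` converges, is bounded by `γ(u,u) = Var(X^M(u)) = E[X^M(u)²]`,
and the reconstruction `𝓛(X^O)(u) = Σ_k ξ_k φ̃_k(u)` exists as an L²-limit with
`Var(𝓛(X^O)(u)) = Σ_k λ_k φ̃_k(u)²`. -/
theorem optimal_reconstruction_finite_variance
    {Ω : Type*} [MeasurableSpace Ω] (P : Measure Ω) [IsProbabilityMeasure P]
    (ξ : ℕ → Ω → ℝ) (lam : ℕ → ℝ) (hpos : ∀ k, 0 < lam k)
    (hL2 : ∀ k, MemLp (ξ k) 2 P)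
    (hmean : ∀ k, ∫ ω, ξ k ω ∂P = 0)
    (hvar : ∀ k, ∫ ω, (ξ k ω) ^ 2 ∂P = lam k)
    (huncorr : ∀ k l, k ≠ l → ∫ ω, ξ k ω * ξ l ω ∂P = 0)
    -- X^M(u), mean zero and square integrable
    (Xu : Ω → ℝ) (hXu : MemLp Xu 2 P) (hXumean : ∫ ω, Xu ω ∂P = 0)
    -- φ̃_k(u), defined through E[ξ_k X^M(u)] = λ_k φ̃_k(u)
    (φt : ℕ → ℝ) (hcross : ∀ k, ∫ ω, ξ k ω * Xu ω ∂P = lam k * φt k) :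
    (Summable (fun k => lam k * φt k ^ 2)) ∧
    (∑' k, lam k * φt k ^ 2 ≤ ∫ ω, (Xu ω) ^ 2 ∂P) ∧
    (∃ Lu : Ω → ℝ, MemLp Lu 2 P ∧
      Tendsto (fun K => ∫ ω, (∑ k ∈ Finset.range K, ξ k ω * φt k - Lu ω) ^ 2 ∂P)
        atTop (nhds 0) ∧
      variance Lu P = ∑' k, lam k * φt k ^ 2) := by
  classical
  -- inner products in L² are integrals
  have hip : ∀ f g : Lp ℝ 2 P, (inner ℝ f g : ℝ) = ∫ ω, f ω * g ω ∂P := by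
    intro f g
    rw [MeasureTheory.L2.inner_def]
    apply integral_congr_ae
    filter_upwards with ω
    simp [RCLike.inner_apply, mul_comm]
  set w : ℕ → Lp ℝ 2 P := fun k => (hL2 k).toLp (ξ k) with hw
  set x : Lp ℝ 2 P := hXu.toLp Xu with hx
  have hww : ∀ k l, (inner ℝ (w k) (w l) : ℝ) = ∫ ω, ξ k ω * ξ l ω ∂P := by
    intro k l
    rw [hip]
    apply integral_congr_ae
    filter_upwards [(hL2 k).coeFn_toLp, (hL2 l).coeFn_toLp] with ω h1 h2
    rw [h1, h2]
  have hwx : ∀ k, (inner ℝ (w k) x : ℝ) = lam k * φt k := by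
    intro k
    rw [hip, ← hcross k]
    apply integral_congr_ae
    filter_upwards [(hL2 k).coeFn_toLp, hXu.coeFn_toLp] with ω h1 h2
    rw [h1, h2]
  set s : ℕ → ℝ := fun k => Real.sqrt (lam k) with hsdef
  have hs : ∀ k, 0 < s k := fun k => Real.sqrt_pos.2 (hpos k)
  have hs2 : ∀ k, s k * s k = lam k := fun k => Real.mul_self_sqrt (hpos k).le
  set v : ℕ → Lp ℝ 2 P := fun k => (s k)⁻¹ • w k with hvdef
  have hv : Orthonormal ℝ v := by
    rw [orthonormal_iff_ite]
    intro i j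
    rw [hvdef]
    simp only [real_inner_smul_left, real_inner_smul_right, hww]
    by_cases h : i = j
    · subst h
      have hii : ∫ ω, ξ i ω * ξ i ω ∂P = lam i := by
        rw [← hvar i]; congr 1; ext ω; ring
      rw [hii, if_pos rfl, ← hs2 i]
      field_simp
      exact div_self (hs i).ne'
    · rw [huncorr i j h, if_neg h]
      ring
  have hvx : ∀ k, (inner ℝ (v k) x : ℝ) = s k * φt k := by
    intro k
    rw [hvdef]
    simp only [real_inner_smul_left, hwx]
    rw [← hs2 k, mul_assoc, ← mul_assoc, inv_mul_cancel₀ (hs k).ne', one_mul]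
  have hnormsq : ∀ k, ‖(inner ℝ (v k) x : ℝ)‖ ^ 2 = lam k * φt k ^ 2 := by
    intro k
    rw [hvx, Real.norm_eq_abs, sq_abs, mul_pow, sq, hs2]
  -- 1. Summability (Bessel)
  have hsummable : Summable (fun k => lam k * φt k ^ 2) := by
    have := hv.inner_products_summable (x := x)
    exact this.congr hnormsq
  refine ⟨hsummable, ?_, ?_⟩
  -- 2. Bessel bound
  · have hxx : ‖x‖ ^ 2 = ∫ ω, (Xu ω) ^ 2 ∂P := by
      rw [← real_inner_self_eq_norm_sq, hip]
      apply integral_congr_ae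
      filter_upwards [hXu.coeFn_toLp] with ω h1
      rw [h1, sq]
    have := hv.tsum_inner_products_le (x := x)
    rw [hxx] at this
    calc ∑' k, lam k * φt k ^ 2 = ∑' k, ‖(inner ℝ (v k) x : ℝ)‖ ^ 2 :=
          (tsum_congr fun k => (hnormsq k).symm)
      _ ≤ _ := this
  -- 3. the reconstruction
  · set c : ℕ → ℝ := fun k => s k * φt k with hcdef
    have hc : ∀ k, c k • v k = φt k • w k := by
      intro k
      rw [hvdef, smul_smul]
      congr 1
      simp only [hcdef]
      rw [mul_comm (s k) (φt k), mul_assoc, mul_inv_cancel₀ (hs k).ne', mul_one]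
    have hcsum : Summable fun k => c k • v k := by
      have h2 : Summable fun k => ‖c k‖ ^ 2 := by
        apply hsummable.congr
        intro k
        simp only [Real.norm_eq_abs, sq_abs, hcdef]
        rw [← hs2 k]
        ring
      have := (hv.orthogonalFamily.summable_iff_norm_sq_summable c).2 h2
      simpa only [LinearIsometry.toSpanSingleton_apply] using this
    set L : Lp ℝ 2 P := ∑' k, c k • v k with hLdef
    have hLsum : HasSum (fun k => c k • v k) L := hcsum.hasSum
    set T : ℕ → Lp ℝ 2 P := fun K => ∑ k ∈ Finset.range K, φt k • w k with hTdef
    have hT2 : ∀ K, T K = ∑ k ∈ Finset.range K, c k • v k := by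
      intro K
      exact Finset.sum_congr rfl fun k _ => (hc k).symm
    have htendT : Tendsto T atTop (nhds L) := by
      have := hLsum.tendsto_sum_nat
      apply this.congr
      intro K
      exact (hT2 K).symm
    have hTae : ∀ K, (T K : Ω → ℝ) =ᵐ[P]
        fun ω => ∑ k ∈ Finset.range K, ξ k ω * φt k := by
      intro K
      induction K with
      | zero =>
        simp only [hTdef, Finset.range_zero, Finset.sum_empty]
        filter_upwards [Lp.coeFn_zero ℝ 2 P] with ω h
        simpa using h
      | succ n ih =>
        have hstep : T (n + 1) = T n + φt n • w n := Finset.sum_range_succ _ n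
        rw [hstep]
        filter_upwards [Lp.coeFn_add (T n) (φt n • w n), ih,
          Lp.coeFn_smul (φt n) (w n), (hL2 n).coeFn_toLp] with ω h1 h2 h3 h4
        rw [h1, Pi.add_apply, h2, h3, Pi.smul_apply, h4, Finset.sum_range_succ,
          smul_eq_mul, mul_comm]
    refine ⟨(L : Ω → ℝ), Lp.memLp L, ?_, ?_⟩
    · -- L² convergence
      have hTL : ∀ K, ∫ ω, (∑ k ∈ Finset.range K, ξ k ω * φt k - L ω) ^ 2 ∂P
          = ‖T K - L‖ ^ 2 := by
        intro K
        rw [← real_inner_self_eq_norm_sq, hip]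
        apply integral_congr_ae
        filter_upwards [Lp.coeFn_sub (T K) L, hTae K] with ω h1 h2
        rw [h1, Pi.sub_apply, h2, sq]
      have hn : Tendsto (fun K => ‖T K - L‖) atTop (nhds 0) :=
        tendsto_iff_norm_sub_tendsto_zero.1 htendT
      have := hn.pow 2
      norm_num at this
      exact this.congr fun K => (hTL K).symm
    · -- variance computation
      have hmeanL : ∫ ω, L ω ∂P = 0 := by
        set one : Lp ℝ 2 P := (memLp_const (1 : ℝ)).toLp (fun _ => (1 : ℝ)) with honed
        have hone : ∀ f : Lp ℝ 2 P, (inner ℝ f one : ℝ) = ∫ ω, f ω ∂P := by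
          intro f
          rw [hip]
          apply integral_congr_ae
          filter_upwards [(memLp_const (1 : ℝ)).coeFn_toLp] with ω h
          rw [h, mul_one]
        have hTone : ∀ K, (inner ℝ (T K) one : ℝ) = 0 := by
          intro K
          rw [hone]
          have : ∫ ω, (T K : Ω → ℝ) ω ∂P
              = ∫ ω, ∑ k ∈ Finset.range K, ξ k ω * φt k ∂P :=
            integral_congr_ae (hTae K)
          rw [this, integral_finset_sum]
          · apply Finset.sum_eq_zero
            intro k _
            rw [integral_mul_const, hmean k, zero_mul]
          · intro k _
            exact ((hL2 k).integrable one_le_two).mul_const _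
        have hcont : Tendsto (fun K => (inner ℝ (T K) one : ℝ)) atTop
            (nhds (inner ℝ L one : ℝ)) := htendT.inner tendsto_const_nhds
        have : (inner ℝ L one : ℝ) = 0 :=
          tendsto_nhds_unique hcont (by simpa [hTone] using tendsto_const_nhds)
        rw [← hone L, this]
      have hsqL : ∫ ω, (L ω) ^ 2 ∂P = ‖L‖ ^ 2 := by
        rw [← real_inner_self_eq_norm_sq, hip]
        apply integral_congr_ae
        filter_upwards with ω
        rw [sq]
      have hTnorm : ∀ K, ‖T K‖ ^ 2 = ∑ k ∈ Finset.range K, lam k * φt k ^ 2 := by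
        intro K
        rw [← real_inner_self_eq_norm_sq, hT2 K, hv.inner_sum c c]
        apply Finset.sum_congr rfl
        intro k _
        simp only [RCLike.star_def, conj_trivial, hcdef]
        rw [← hs2 k]
        ring
      have h1 : Tendsto (fun K => ‖T K‖ ^ 2) atTop (nhds (‖L‖ ^ 2)) :=
        (htendT.norm).pow 2
      have h2 : Tendsto (fun K => ∑ k ∈ Finset.range K, lam k * φt k ^ 2)
          atTop (nhds (∑' k, lam k * φt k ^ 2)) :=
        hsummable.hasSum.tendsto_sum_nat
      have hLnorm : ‖L‖ ^ 2 = ∑' k, lam k * φt k ^ 2 :=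
        tendsto_nhds_unique (h1.congr fun K => hTnorm K) h2
      rw [variance_eq_sub (Lp.memLp L)]
      have : P[(L : Ω → ℝ) ^ 2] = ∫ ω, (L ω) ^ 2 ∂P := by
        apply integral_congr_ae
        filter_upwards with ω
        simp
      rw [this, hsqL, hLnorm, hmeanL]
      ring
end

section
/- (Optimality of 𝓛.) Let L(X^O) = ⟨b, X^O⟩_H := L²-limit of Σ_k ⟨b,φ_k⟩ ξ_k/λ_k for some b ∈ H. Then for every u ∈ M, E[(X(u) − L(X^O))²] = E[(𝓛(X^O)(u) − L(X^O))²] + E[Z(u)²] ≥ E[Z(u)²], where Z(u) = X(u) − 𝓛(X^O)(u). In particular the optimal linear reconstruction operator minimizing mean squared error is 𝓛. -/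
open MeasureTheory ProbabilityTheory Filter

section Helpers
variable {Ω : Type*} [MeasurableSpace Ω] {P : Measure Ω}

lemma myLp_coeFn_sum {ι : Type*} (s : Finset ι) (f : ι → Lp ℝ 2 P) :
    ⇑(∑ i ∈ s, f i) =ᵐ[P] fun ω => ∑ i ∈ s, f i ω := by
  classical
  induction s using Finset.induction_on with
  | empty => simp only [Finset.sum_empty]; exact Lp.coeFn_zero (E := ℝ) (p := 2) (μ := P)
  | insert _ _ h ih =>
    rename_i a s
    rw [Finset.sum_insert h]
    filter_upwards [Lp.coeFn_add (f a) (∑ i ∈ s, f i), ih] with ω h1 h2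
    rw [h1, Pi.add_apply, h2, Finset.sum_insert h]

lemma my_inner_eq (f g : Lp ℝ 2 P) (f' g' : Ω → ℝ) (hf : ⇑f =ᵐ[P] f') (hg : ⇑g =ᵐ[P] g') :
    (inner ℝ f g : ℝ) = ∫ ω, f' ω * g' ω ∂P := by
  rw [MeasureTheory.L2.inner_def]
  refine integral_congr_ae ?_
  filter_upwards [hf, hg] with ω h1 h2
  simp [h1, h2, real_inner_comm, mul_comm]

lemma my_norm_sq (f : Lp ℝ 2 P) (f' : Ω → ℝ) (hf : ⇑f =ᵐ[P] f') :
    ‖f‖ ^ 2 = ∫ ω, (f' ω) ^ 2 ∂P := by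
  rw [← real_inner_self_eq_norm_sq, my_inner_eq f f f' f' hf hf]
  simp [sq]

end Helpers

/-- Optimality of `𝓛`: for any reconstruction operator `L(X^O) = ⟨b,X^O⟩_H` (the L²-limit
of `Σ_k ⟨b,φ_k⟩ ξ_k/λ_k` for some `b ∈ H`) one has, for `u ∈ M`,
`E[(X(u) − L(X^O))²] = E[(𝓛(X^O)(u) − L(X^O))²] + E[Z(u)²] ≥ E[Z(u)²]`,
where `Z(u) = X(u) − 𝓛(X^O)(u)`. -/
theorem optimal_reconstruction_minimizes_mse
    {Ω : Type*} [MeasurableSpace Ω] (P : Measure Ω) [IsProbabilityMeasure P]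
    (ξ : ℕ → Ω → ℝ) (lam : ℕ → ℝ) (hpos : ∀ k, 0 < lam k)
    (hL2 : ∀ k, MemLp (ξ k) 2 P)
    (hmean : ∀ k, ∫ ω, ξ k ω ∂P = 0)
    (hvar : ∀ k, ∫ ω, (ξ k ω) ^ 2 ∂P = lam k)
    (huncorr : ∀ k l, k ≠ l → ∫ ω, ξ k ω * ξ l ω ∂P = 0)
    -- X(u) for u ∈ M and the extrapolated coefficients φ̃_k(u) = E[ξ_k X(u)]/λ_k
    (Xu : Ω → ℝ) (hXu : MemLp Xu 2 P)
    (φt : ℕ → ℝ) (hcross : ∀ k, ∫ ω, ξ k ω * Xu ω ∂P = lam k * φt k)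
    (hφt : Summable (fun k => lam k * φt k ^ 2))
    -- the optimal reconstruction 𝓛(X^O)(u) = Σ_k ξ_k φ̃_k(u)
    (Lu : Ω → ℝ) (hLu2 : MemLp Lu 2 P)
    (hLu : Tendsto (fun K => ∫ ω, (∑ k ∈ Finset.range K, ξ k ω * φt k - Lu ω) ^ 2 ∂P)
      atTop (nhds 0))
    -- a competing reconstruction operator: L(X^O) = ⟨b,X^O⟩_H with coefficients
    -- c k = ⟨b,φ_k⟩ satisfying Σ_k c_k²/λ_k < ∞
    (c : ℕ → ℝ) (hc : Summable (fun k => c k ^ 2 / lam k))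
    (LX : Ω → ℝ) (hLX2 : MemLp LX 2 P)
    (hLX : Tendsto (fun K => ∫ ω, (∑ k ∈ Finset.range K, (c k / lam k) * ξ k ω - LX ω) ^ 2 ∂P)
      atTop (nhds 0)) :
    (∫ ω, (Xu ω - LX ω) ^ 2 ∂P
      = (∫ ω, (Lu ω - LX ω) ^ 2 ∂P) + ∫ ω, (Xu ω - Lu ω) ^ 2 ∂P) ∧
    (∫ ω, (Xu ω - Lu ω) ^ 2 ∂P ≤ ∫ ω, (Xu ω - LX ω) ^ 2 ∂P) := by

  classical
  set ξe : ℕ → Lp ℝ 2 P := fun k => (hL2 k).toLp (ξ k) with hξedef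
  set Xe : Lp ℝ 2 P := hXu.toLp Xu with hXedef
  set Le : Lp ℝ 2 P := hLu2.toLp Lu with hLedef
  set LXe : Lp ℝ 2 P := hLX2.toLp LX with hLXedef
  set Se : ℕ → Lp ℝ 2 P := fun K => ∑ j ∈ Finset.range K, φt j • ξe j with hSedef
  set Te : ℕ → Lp ℝ 2 P := fun K => ∑ j ∈ Finset.range K, (c j / lam j) • ξe j with hTedef
  -- a.e. identifications of the partial sums
  have hcoe : ∀ (a : ℕ → ℝ) (K : ℕ),
      ⇑(∑ j ∈ Finset.range K, a j • ξe j) =ᵐ[P] fun ω => ∑ j ∈ Finset.range K, a j * ξ j ω := by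
    intro a K
    have h2 : ∀ j, ⇑(a j • ξe j) =ᵐ[P] fun ω => a j * ξ j ω := by
      intro j
      filter_upwards [Lp.coeFn_smul (a j) (ξe j), (hL2 j).coeFn_toLp] with ω ha hb
      rw [ha, Pi.smul_apply, smul_eq_mul, hb]
    have h3 : ∀ᵐ ω ∂P, ∀ j ∈ Finset.range K, ⇑(a j • ξe j) ω = a j * ξ j ω :=
      (ae_ball_iff (Finset.range K).countable_toSet).2 (fun j _ => h2 j)
    filter_upwards [myLp_coeFn_sum (Finset.range K) (fun j => a j • ξe j), h3] with ω ha hb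
    rw [ha]
    exact Finset.sum_congr rfl fun j hj => hb j hj
  have hSec : ∀ K, ⇑(Se K) =ᵐ[P] fun ω => ∑ j ∈ Finset.range K, ξ j ω * φt j := by
    intro K
    filter_upwards [hcoe φt K] with ω h
    rw [hSedef, h]
    exact Finset.sum_congr rfl fun j _ => mul_comm _ _
  have hTec : ∀ K, ⇑(Te K) =ᵐ[P] fun ω => ∑ j ∈ Finset.range K, (c j / lam j) * ξ j ω :=
    fun K => hcoe (fun j => c j / lam j) K
  -- generic convergence transfer
  have keyconv : ∀ (G : ℕ → Lp ℝ 2 P) (g : Lp ℝ 2 P) (G' : ℕ → Ω → ℝ) (g' : Ω → ℝ),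
      (∀ K, ⇑(G K) =ᵐ[P] G' K) → ⇑g =ᵐ[P] g' →
      Tendsto (fun K => ∫ ω, (G' K ω - g' ω) ^ 2 ∂P) atTop (nhds 0) →
      Tendsto G atTop (nhds g) := by
    intro G g G' g' hG hg h
    rw [tendsto_iff_norm_sub_tendsto_zero]
    have hnorm : ∀ K, ‖G K - g‖ ^ 2 = ∫ ω, (G' K ω - g' ω) ^ 2 ∂P := by
      intro K
      refine my_norm_sq _ _ ?_
      filter_upwards [Lp.coeFn_sub (G K) g, hG K, hg] with ω h1 h2 h3
      rw [h1, Pi.sub_apply, h2, h3]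
    have h2 : Tendsto (fun K => ‖G K - g‖ ^ 2) atTop (nhds 0) := by
      simp only [hnorm]; exact h
    have h3 := h2.sqrt
    rw [Real.sqrt_zero] at h3
    refine h3.congr fun K => ?_
    rw [Real.sqrt_sq (norm_nonneg _)]
  have hLconv : Tendsto Se atTop (nhds Le) :=
    keyconv Se Le _ Lu hSec hLu2.coeFn_toLp hLu
  have hLXconv : Tendsto Te atTop (nhds LXe) :=
    keyconv Te LXe _ LX hTec hLX2.coeFn_toLp hLX
  -- inner products of the basic variables
  have hξξ : ∀ j k, (inner ℝ (ξe j) (ξe k) : ℝ) = ∫ ω, ξ j ω * ξ k ω ∂P :=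
    fun j k => my_inner_eq _ _ _ _ ((hL2 j).coeFn_toLp) ((hL2 k).coeFn_toLp)
  have hSeξ : ∀ K k, k < K → (inner ℝ (Se K) (ξe k) : ℝ) = lam k * φt k := by
    intro K k hk
    rw [hSedef]
    simp only [sum_inner, real_inner_smul_left]
    rw [Finset.sum_eq_single k]
    · rw [hξξ]
      have : ∫ ω, ξ k ω * ξ k ω ∂P = lam k := by simpa [sq] using hvar k
      rw [this, mul_comm]
    · intro j _ hj
      rw [hξξ, huncorr j k hj, mul_zero]
    · intro h
      exact absurd (Finset.mem_range.2 hk) h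
  have hLeξ : ∀ k, (inner ℝ Le (ξe k) : ℝ) = lam k * φt k := by
    intro k
    have h1 : Tendsto (fun K => (inner ℝ (Se K) (ξe k) : ℝ)) atTop (nhds (inner ℝ Le (ξe k))) :=
      hLconv.inner tendsto_const_nhds
    have h2 : Tendsto (fun K => (inner ℝ (Se K) (ξe k) : ℝ)) atTop (nhds (lam k * φt k)) := by
      refine Tendsto.congr' ?_ tendsto_const_nhds
      filter_upwards [eventually_ge_atTop (k + 1)] with K hK
      exact (hSeξ K k (by omega)).symm
    exact tendsto_nhds_unique h1 h2
  have hXeξ : ∀ k, (inner ℝ Xe (ξe k) : ℝ) = lam k * φt k := by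
    intro k
    rw [my_inner_eq Xe (ξe k) Xu (ξ k) hXu.coeFn_toLp ((hL2 k).coeFn_toLp), ← hcross k]
    exact integral_congr_ae (Eventually.of_forall fun ω => mul_comm _ _)
  have hZξ : ∀ k, (inner ℝ (Xe - Le) (ξe k) : ℝ) = 0 := by
    intro k
    rw [inner_sub_left, hXeξ, hLeξ, sub_self]
  have hZsum : ∀ (a : ℕ → ℝ) (K : ℕ),
      (inner ℝ (Xe - Le) (∑ j ∈ Finset.range K, a j • ξe j) : ℝ) = 0 := by
    intro a K
    rw [inner_sum]
    refine Finset.sum_eq_zero fun j _ => ?_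
    rw [real_inner_smul_right, hZξ, mul_zero]
  have hZL : (inner ℝ (Xe - Le) Le : ℝ) = 0 := by
    have h1 : Tendsto (fun K => (inner ℝ (Xe - Le) (Se K) : ℝ)) atTop
        (nhds (inner ℝ (Xe - Le) Le)) := Tendsto.inner tendsto_const_nhds hLconv
    have h2 : Tendsto (fun K => (inner ℝ (Xe - Le) (Se K) : ℝ)) atTop (nhds 0) := by
      refine Tendsto.congr (fun K => ?_) tendsto_const_nhds
      exact (hZsum φt K).symm
    exact tendsto_nhds_unique h1 h2
  have hZLX : (inner ℝ (Xe - Le) LXe : ℝ) = 0 := by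
    have h1 : Tendsto (fun K => (inner ℝ (Xe - Le) (Te K) : ℝ)) atTop
        (nhds (inner ℝ (Xe - Le) LXe)) := Tendsto.inner tendsto_const_nhds hLXconv
    have h2 : Tendsto (fun K => (inner ℝ (Xe - Le) (Te K) : ℝ)) atTop (nhds 0) := by
      refine Tendsto.congr (fun K => ?_) tendsto_const_nhds
      exact (hZsum (fun j => c j / lam j) K).symm
    exact tendsto_nhds_unique h1 h2
  have hGF : (inner ℝ (Le - LXe) (Xe - Le) : ℝ) = 0 := by
    rw [real_inner_comm, inner_sub_right, hZL, hZLX, sub_self]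
  -- identify the three integrals with norms
  have hae : ∀ (f g : Ω → ℝ) (hf : MemLp f 2 P) (hg : MemLp g 2 P),
      ⇑(hf.toLp f - hg.toLp g) =ᵐ[P] fun ω => f ω - g ω := by
    intro f g hf hg
    filter_upwards [Lp.coeFn_sub (hf.toLp f) (hg.toLp g), hf.coeFn_toLp, hg.coeFn_toLp]
      with ω h1 h2 h3
    rw [h1, Pi.sub_apply, h2, h3]
  have e1 : ∫ ω, (Xu ω - LX ω) ^ 2 ∂P = ‖Xe - LXe‖ ^ 2 :=
    (my_norm_sq _ _ (hae Xu LX hXu hLX2)).symm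
  have e2 : ∫ ω, (Lu ω - LX ω) ^ 2 ∂P = ‖Le - LXe‖ ^ 2 :=
    (my_norm_sq _ _ (hae Lu LX hLu2 hLX2)).symm
  have e3 : ∫ ω, (Xu ω - Lu ω) ^ 2 ∂P = ‖Xe - Le‖ ^ 2 :=
    (my_norm_sq _ _ (hae Xu Lu hXu hLu2)).symm
  have hdecomp : Xe - LXe = (Le - LXe) + (Xe - Le) := by abel
  have hpyth : ‖Xe - LXe‖ ^ 2 = ‖Le - LXe‖ ^ 2 + ‖Xe - Le‖ ^ 2 := by
    rw [hdecomp, norm_add_sq_real, hGF]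
    ring
  refine ⟨by rw [e1, e2, e3, hpyth], ?_⟩
  rw [e1, e3, hpyth]
  nlinarith [sq_nonneg ‖Le - LXe‖]
end

section
/- (Accumulated reconstruction error bound.) Let X be a mean-zero square-integrable process. Let 𝓛₁ denote the optimal linear reconstruction from X^{O₁} and 𝓛₂ the optimal linear reconstruction from X^{O₂}, and let X̃^{O₂} := 𝓛₁-reconstruction of X on O₂ (i.e., X^{O₂} = X̃^{O₂} + Z^{O₂} with Z^{O₂}(v) uncorrelated with X^{O₁}). Then for u ∈ M₂, E[(X(u) − 𝓛₂(X̃^{O₂})(u))²] ≤ E[(X(u) − 𝓛₂(X^{O₂})(u))²] + E[(X(u) − 𝓛₁(X^{O₁})(u))²]. -/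
open MeasureTheory ProbabilityTheory

/-- Accumulated reconstruction error bound: with `𝓛₂(X^{O₂}) = 𝓛₂(X̃^{O₂}) + 𝓛₂(Z^{O₂})`
(linearity), where `𝓛₂(Z^{O₂})(u)` is uncorrelated with both `𝓛₂(X̃^{O₂})(u)` and
`𝓛₁(X^{O₁})(u)`, one has for `u ∈ M₂`:
`E[(X(u) − 𝓛₂(X̃^{O₂})(u))²] ≤ E[(X(u) − 𝓛₂(X^{O₂})(u))²] + E[(X(u) − 𝓛₁(X^{O₁})(u))²]`. -/
theorem accumulated_reconstruction_error_bound
    {Ω : Type*} [MeasurableSpace Ω] (P : Measure Ω) [IsProbabilityMeasure P]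
    -- X(u) for u ∈ M₂, mean zero
    (Xu : Ω → ℝ) (hXu : MemLp Xu 2 P) (hXumean : ∫ ω, Xu ω ∂P = 0)
    -- L1 = 𝓛₁(X^{O₁})(u), L2X = 𝓛₂(X^{O₂})(u), L2Xt = 𝓛₂(X̃^{O₂})(u), L2Z = 𝓛₂(Z^{O₂})(u)
    (L1 L2X L2Xt L2Z : Ω → ℝ)
    (hL1 : MemLp L1 2 P) (hL2X : MemLp L2X 2 P)
    (hL2Xt : MemLp L2Xt 2 P) (hL2Z : MemLp L2Z 2 P)
    -- linearity of 𝓛₂ applied to X^{O₂} = X̃^{O₂} + Z^{O₂}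
    (hlin : ∀ ω, L2X ω = L2Xt ω + L2Z ω)
    -- Z^{O₂} is orthogonal to the closed linear span of X^{O₁}
    (horth1 : ∫ ω, L2Xt ω * L2Z ω ∂P = 0)
    (horth2 : ∫ ω, L1 ω * L2Z ω ∂P = 0) :
    ∫ ω, (Xu ω - L2Xt ω) ^ 2 ∂P
      ≤ (∫ ω, (Xu ω - L2X ω) ^ 2 ∂P) + ∫ ω, (Xu ω - L1 ω) ^ 2 ∂P := by
  have hmul : ∀ f g : Ω → ℝ, MemLp f 2 P → MemLp g 2 P →
      Integrable (fun ω => f ω * g ω) P := by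
    intro f g hf hg
    have h1 := (hf.add hg).integrable_sq
    have h2 := hf.integrable_sq
    have h3 := hg.integrable_sq
    have heq : (fun ω => f ω * g ω)
        = fun ω => ((f ω + g ω) ^ 2 - f ω ^ 2 - g ω ^ 2) / 2 := by
      funext ω; ring
    rw [heq]
    exact ((h1.sub h2).sub h3).div_const 2
  have hA : Integrable (fun ω => (Xu ω - L2X ω) ^ 2) P := (hXu.sub hL2X).integrable_sq
  have hB : Integrable (fun ω => (Xu ω - L1 ω) ^ 2) P := (hXu.sub hL1).integrable_sq
  have hC : Integrable (fun ω => (Xu ω - L1 ω - L2Z ω) ^ 2) P :=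
    ((hXu.sub hL1).sub hL2Z).integrable_sq
  have hD : Integrable (fun ω => L1 ω * L2Z ω) P := hmul _ _ hL1 hL2Z
  have hE : Integrable (fun ω => L2Xt ω * L2Z ω) P := hmul _ _ hL2Xt hL2Z
  have hAB : Integrable (fun ω => (Xu ω - L2X ω) ^ 2 + (Xu ω - L1 ω) ^ 2) P := hA.add hB
  have hABC : Integrable (fun ω =>
      (Xu ω - L2X ω) ^ 2 + (Xu ω - L1 ω) ^ 2 - (Xu ω - L1 ω - L2Z ω) ^ 2) P := hAB.sub hC
  have hD2 : Integrable (fun ω => 2 * (L1 ω * L2Z ω)) P := hD.const_mul 2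
  have hE2 : Integrable (fun ω => 2 * (L2Xt ω * L2Z ω)) P := hE.const_mul 2
  have hDE : Integrable (fun ω => 2 * (L1 ω * L2Z ω) - 2 * (L2Xt ω * L2Z ω)) P := hD2.sub hE2
  have hEq : (fun ω => (Xu ω - L2Xt ω) ^ 2)
      = fun ω => ((Xu ω - L2X ω) ^ 2 + (Xu ω - L1 ω) ^ 2 - (Xu ω - L1 ω - L2Z ω) ^ 2)
          + (2 * (L1 ω * L2Z ω) - 2 * (L2Xt ω * L2Z ω)) := by
    funext ω
    rw [hlin ω]; ring
  have key : ∫ ω, (Xu ω - L2Xt ω) ^ 2 ∂P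
      = ((∫ ω, (Xu ω - L2X ω) ^ 2 ∂P) + (∫ ω, (Xu ω - L1 ω) ^ 2 ∂P)
          - ∫ ω, (Xu ω - L1 ω - L2Z ω) ^ 2 ∂P)
        + (2 * (∫ ω, L1 ω * L2Z ω ∂P) - 2 * ∫ ω, L2Xt ω * L2Z ω ∂P) := by
    rw [hEq, integral_add hABC hDE, integral_sub hAB hC, integral_add hA hB,
      integral_sub hD2 hE2, integral_const_mul, integral_const_mul]
  have hnn : 0 ≤ ∫ ω, (Xu ω - L1 ω - L2Z ω) ^ 2 ∂P :=
    integral_nonneg fun ω => sq_nonneg _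
  rw [key, horth1, horth2]
  linarith
end
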